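/- Suppose the conditional IV assumptions and positivity hold and, for every x ∈ 𝒳: δ^D(x) ≠ 0 and the conditional no-interaction assumption A5.b holds within stratum x, i.e. E[Y1 − Y0 | X=x, U=u] = E[Y1 − Y0 | X=x] for every u ∈ 𝒰. Then the marginal average treatment effect equals the average Wald estimand: E[Y1 − Y0] = Σ_{x∈𝒳} μ(X=x) · ( E[Y | Z=1, X=x] − E[Y | Z=0, X=x] ) / ( E[D | Z=1, X=x] − E[D | Z=0, X=x] ). -/

import Mathlib

/-!
Within a cell `{X = x, U = u}` the potential outcomes are independent of `(Z, D)`, so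
`E[Y | Z = z, cell] = E[Y1 | cell] p_z + E[Y0 | cell] (1 - p_z)` with `p_z = E[D | Z = z, cell]`:
the cell's intention-to-treat contrast (`itt`, the Wald numerator) is its ATE times its
first-stage contrast `p_1 - p_0` (`firstStage`, the Wald denominator). By A5.b every cell ATE
equals the stratum ATE `τ(x)`, and since `Z ⊥ U` given `X = x`, conditioning on `Z = z` leaves
the weights `μ(U = u | X = x)` unchanged; averaging over `u` gives `itt(x) = τ(x) δ^D(x)`.
Dividing by `δ^D(x) ≠ 0` and averaging `τ(x)` over `x` gives the ATE.
-/

open MeasureTheory ProbabilityTheory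

/-- Conditional mean of `W` given event `A`: `E[W | A] = (∫_A W dμ) / μ(A)`. -/
noncomputable def condMean {Ω : Type*} [MeasurableSpace Ω] (μ : Measure Ω)
    (W : Ω → ℝ) (A : Set Ω) : ℝ :=
  (∫ ω in A, W ω ∂μ) / (μ A).toReal

theorem one_sub_eq_zero_or_one {d : ℝ} (h : d = 0 ∨ d = 1) : 1 - d = 0 ∨ 1 - d = 1 := by
  rcases h with rfl | rfl <;> simp

section

variable {Ω : Type*} [MeasurableSpace Ω] {ν : Measure Ω}

theorem MeasureTheory.Integrable.cond {W : Ω → ℝ} (hW : Integrable W ν) (s : Set Ω) :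
    Integrable W ν[|s] := by
  by_cases hs : ν s = 0
  · simp [cond_eq_zero_of_meas_eq_zero hs]
  · exact hW.restrict.smul_measure (ENNReal.inv_ne_top.mpr hs)

theorem condMean_eq_integral_cond (μ : Measure Ω) (W : Ω → ℝ) (s : Set Ω) :
    condMean μ W s = ∫ ω, W ω ∂μ[|s] := by
  rw [ProbabilityTheory.cond, integral_smul_measure, ENNReal.toReal_inv, condMean, smul_eq_mul,
    div_eq_inv_mul]

theorem integral_eq_sum_measureReal_mul_integral_cond [IsFiniteMeasure ν]
    {α : Type*} [Fintype α] [MeasurableSpace α] [MeasurableSingletonClass α]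
    {U : Ω → α} (hU : Measurable U) {W : Ω → ℝ} (hW : Integrable W ν) :
    ∫ ω, W ω ∂ν = ∑ u, ν.real {ω | U ω = u} * ∫ ω, W ω ∂ν[|{ω | U ω = u}] := by
  conv_lhs => rw [← sum_meas_smul_cond_fiber hU ν]
  rw [integral_finsetSum_measure fun u _ => (hW.cond _).smul_measure (measure_ne_top _ _)]
  simp only [integral_smul_measure, smul_eq_mul, measureReal_def]
  rfl

theorem cond_apply_eq_of_inter_eq_mul [IsFiniteMeasure ν] {A B : Set Ω} (hA : MeasurableSet A)
    (hA0 : ν A ≠ 0) (hAB : ν (A ∩ B) = ν A * ν B) : ν[B|A] = ν B := by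
  rw [cond_apply hA, hAB, ← mul_assoc, ENNReal.inv_mul_cancel hA0 (measure_ne_top _ _), one_mul]

theorem integral_cond_eq_sum_of_inter_eq_mul [IsFiniteMeasure ν]
    {α : Type*} [Fintype α] [MeasurableSpace α] [MeasurableSingletonClass α]
    {U : Ω → α} (hU : Measurable U) {A : Set Ω} (hA : MeasurableSet A) (hA0 : ν A ≠ 0)
    (hAU : ∀ u, ν (A ∩ {ω | U ω = u}) = ν A * ν {ω | U ω = u})
    {W : Ω → ℝ} (hW : Integrable W ν) :
    ∫ ω, W ω ∂ν[|A] = ∑ u, ν.real {ω | U ω = u} * ∫ ω, W ω ∂ν[|{ω | U ω = u}][|A] := by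
  rw [integral_eq_sum_measureReal_mul_integral_cond hU (hW.cond A)]
  refine Finset.sum_congr rfl fun u _ => ?_
  have hUu : MeasurableSet {ω | U ω = u} := hU (measurableSet_singleton u)
  rw [measureReal_def, measureReal_def, cond_apply_eq_of_inter_eq_mul hA hA0 (hAU u),
    cond_cond_eq_cond_inter hA hUu, cond_cond_eq_cond_inter hUu hA, Set.inter_comm]

theorem integral_cond_preimage_comp_mul_of_indepFun {β : Type*} [MeasurableSpace β]
    {W : Ω → ℝ} {V : Ω → β} {f : β → ℝ} {s : Set β} (hWV : IndepFun W V ν)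
    (hW : AEStronglyMeasurable W ν) (hV : Measurable V) (hf : Measurable f)
    (hs : MeasurableSet s) :
    ∫ ω, f (V ω) * W ω ∂ν[|V ⁻¹' s] = (∫ ω, f (V ω) ∂ν[|V ⁻¹' s]) * ∫ ω, W ω ∂ν := by
  have hind : IndepFun W (s.indicator f ∘ V) ν := hWV.comp measurable_id (hf.indicator hs)
  have key := hind.integral_fun_mul_eq_mul_integral hW
    ((hf.indicator hs).comp hV).aestronglyMeasurable
  simp only [ProbabilityTheory.cond, integral_smul_measure, smul_eq_mul,
    ← integral_indicator (hV hs)]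
  have h1 : ∀ ω, (V ⁻¹' s).indicator (fun ω => f (V ω) * W ω) ω
      = W ω * (s.indicator f ∘ V) ω := fun ω => by
    by_cases h : V ω ∈ s <;> simp [h, mul_comm]
  have h2 : ∀ ω, (V ⁻¹' s).indicator (fun ω => f (V ω)) ω = (s.indicator f ∘ V) ω :=
    fun ω => by by_cases h : V ω ∈ s <;> simp [h]
  simp only [h1, h2, key]
  ring

theorem integrable_mul_of_eq_zero_or_one {D W : Ω → ℝ} (hD : Measurable D)
    (hD01 : ∀ ω, D ω = 0 ∨ D ω = 1) (hW : Integrable W ν) :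
    Integrable (fun ω => D ω * W ω) ν :=
  hW.bdd_mul (c := 1) hD.aestronglyMeasurable
    (ae_of_all _ fun ω => by rcases hD01 ω with h | h <;> simp [h])

theorem integrable_of_eq_zero_or_one [IsFiniteMeasure ν] {D : Ω → ℝ} (hD : Measurable D)
    (hD01 : ∀ ω, D ω = 0 ∨ D ω = 1) : Integrable D ν :=
  .of_bound hD.aestronglyMeasurable 1
    (ae_of_all _ fun ω => by rcases hD01 ω with h | h <;> simp [h])

theorem integrable_observed {D Y1 Y0 Y : Ω → ℝ} (hD : Measurable D)
    (hD01 : ∀ ω, D ω = 0 ∨ D ω = 1) (hY1 : Integrable Y1 ν) (hY0 : Integrable Y0 ν)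
    (hY : ∀ ω, Y ω = D ω * Y1 ω + (1 - D ω) * Y0 ω) : Integrable Y ν :=
  ((integrable_mul_of_eq_zero_or_one hD hD01 hY1).add
    (integrable_mul_of_eq_zero_or_one (measurable_const.sub hD)
      (fun ω => one_sub_eq_zero_or_one (hD01 ω)) hY0)).congr (ae_of_all _ fun ω => (hY ω).symm)

theorem integral_cond_observed_eq [IsProbabilityMeasure ν] {Z D Y1 Y0 Y : Ω → ℝ}
    (hZ : Measurable Z) (hD : Measurable D) (hD01 : ∀ ω, D ω = 0 ∨ D ω = 1)
    (hY1 : Integrable Y1 ν) (hY0 : Integrable Y0 ν)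
    (hY : ∀ ω, Y ω = D ω * Y1 ω + (1 - D ω) * Y0 ω)
    (h1 : IndepFun Y1 (fun ω => (Z ω, D ω)) ν) (h0 : IndepFun Y0 (fun ω => (Z ω, D ω)) ν)
    {z : ℝ} (hz : ν {ω | Z ω = z} ≠ 0) :
    ∫ ω, Y ω ∂ν[|{ω | Z ω = z}] = (∫ ω, Y1 ω ∂ν) * ∫ ω, D ω ∂ν[|{ω | Z ω = z}]
      + (∫ ω, Y0 ω ∂ν) * (1 - ∫ ω, D ω ∂ν[|{ω | Z ω = z}]) := by
  have := cond_isProbabilityMeasure (s := {ω | Z ω = z}) hz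
  have hV : Measurable fun ω => (Z ω, D ω) := hZ.prodMk hD
  have hs : MeasurableSet (Prod.fst ⁻¹' {z} : Set (ℝ × ℝ)) :=
    measurable_fst (measurableSet_singleton z)
  have hA : (fun ω => (Z ω, D ω)) ⁻¹' (Prod.fst ⁻¹' {z}) = {ω | Z ω = z} := rfl
  have hD1 := integral_cond_preimage_comp_mul_of_indepFun (f := Prod.snd) h1
    hY1.aestronglyMeasurable hV measurable_snd hs
  have hD0 := integral_cond_preimage_comp_mul_of_indepFun (f := fun q => 1 - q.2) h0
    hY0.aestronglyMeasurable hV (by fun_prop) hs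
  rw [hA] at hD1 hD0
  rw [integral_congr_ae (ae_of_all _ hY), integral_add, hD1, hD0,
    integral_sub (integrable_const 1) (integrable_of_eq_zero_or_one hD hD01)]
  · simp only [integral_const, probReal_univ, smul_eq_mul, mul_one]
    ring
  · exact integrable_mul_of_eq_zero_or_one hD hD01 (hY1.cond _)
  · exact integrable_mul_of_eq_zero_or_one (measurable_const.sub hD)
      (fun ω => one_sub_eq_zero_or_one (hD01 ω)) (hY0.cond _)

theorem itt_eq_ate_mul_firstStage_of_indepFun [IsProbabilityMeasure ν] {Z D Y1 Y0 Y : Ω → ℝ}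
    (hZ : Measurable Z) (hD : Measurable D) (hD01 : ∀ ω, D ω = 0 ∨ D ω = 1)
    (hY1 : Integrable Y1 ν) (hY0 : Integrable Y0 ν)
    (hY : ∀ ω, Y ω = D ω * Y1 ω + (1 - D ω) * Y0 ω)
    (h1 : IndepFun Y1 (fun ω => (Z ω, D ω)) ν) (h0 : IndepFun Y0 (fun ω => (Z ω, D ω)) ν)
    (hZ₁ : ν {ω | Z ω = 1} ≠ 0) (hZ₀ : ν {ω | Z ω = 0} ≠ 0) :
    ∫ ω, Y ω ∂ν[|{ω | Z ω = 1}] - ∫ ω, Y ω ∂ν[|{ω | Z ω = 0}]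
      = (∫ ω, Y1 ω - Y0 ω ∂ν)
        * (∫ ω, D ω ∂ν[|{ω | Z ω = 1}] - ∫ ω, D ω ∂ν[|{ω | Z ω = 0}]) := by
  rw [integral_cond_observed_eq hZ hD hD01 hY1 hY0 hY h1 h0 hZ₁,
    integral_cond_observed_eq hZ hD hD01 hY1 hY0 hY h1 h0 hZ₀, integral_sub hY1 hY0]
  ring

theorem itt_eq_mul_firstStage_of_indep [IsProbabilityMeasure ν]
    {𝒰 : Type*} [Fintype 𝒰] [MeasurableSpace 𝒰] [MeasurableSingletonClass 𝒰]
    {Z D Y1 Y0 Y : Ω → ℝ} {U : Ω → 𝒰}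
    (hZ : Measurable Z) (hD : Measurable D) (hU : Measurable U)
    (hD01 : ∀ ω, D ω = 0 ∨ D ω = 1) (hY1 : Integrable Y1 ν) (hY0 : Integrable Y0 ν)
    (hY : ∀ ω, Y ω = D ω * Y1 ω + (1 - D ω) * Y0 ω)
    (hZU : ∀ (z : ℝ) (u : 𝒰),
      ν ({ω | Z ω = z} ∩ {ω | U ω = u}) = ν {ω | Z ω = z} * ν {ω | U ω = u})
    (h1 : ∀ u, IndepFun Y1 (fun ω => (Z ω, D ω)) ν[|{ω | U ω = u}])
    (h0 : ∀ u, IndepFun Y0 (fun ω => (Z ω, D ω)) ν[|{ω | U ω = u}])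
    (hZ₁ : ν {ω | Z ω = 1} ≠ 0) (hZ₀ : ν {ω | Z ω = 0} ≠ 0)
    {τ : ℝ} (hτ : ∀ u, ∫ ω, Y1 ω - Y0 ω ∂ν[|{ω | U ω = u}] = τ) :
    ∫ ω, Y ω ∂ν[|{ω | Z ω = 1}] - ∫ ω, Y ω ∂ν[|{ω | Z ω = 0}]
      = τ * (∫ ω, D ω ∂ν[|{ω | Z ω = 1}] - ∫ ω, D ω ∂ν[|{ω | Z ω = 0}]) := by
  have hZz (z : ℝ) : MeasurableSet {ω | Z ω = z} := hZ (measurableSet_singleton z)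
  have hcell (u : 𝒰) : ν.real {ω | U ω = u}
      * (∫ ω, Y ω ∂ν[|{ω | U ω = u}][|{ω | Z ω = 1}]
        - ∫ ω, Y ω ∂ν[|{ω | U ω = u}][|{ω | Z ω = 0}])
      = ν.real {ω | U ω = u} * (τ * (∫ ω, D ω ∂ν[|{ω | U ω = u}][|{ω | Z ω = 1}]
        - ∫ ω, D ω ∂ν[|{ω | U ω = u}][|{ω | Z ω = 0}])) := by
    rcases eq_or_ne (ν {ω | U ω = u}) 0 with hu | hu
    · simp [measureReal_def, hu]
    have := cond_isProbabilityMeasure hu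
    have hpos {z : ℝ} (hz : ν {ω | Z ω = z} ≠ 0) : ν[|{ω | U ω = u}] {ω | Z ω = z} ≠ 0 :=
      (cond_pos_of_inter_ne_zero (s := {ω | U ω = u}) (hU (measurableSet_singleton u))
        (by rw [Set.inter_comm, hZU]; exact mul_ne_zero hz hu)).ne'
    rw [← hτ u, itt_eq_ate_mul_firstStage_of_indepFun hZ hD hD01 (hY1.cond _) (hY0.cond _) hY
      (h1 u) (h0 u) (hpos hZ₁) (hpos hZ₀)]
  have hYint := integrable_observed hD hD01 hY1 hY0 hY
  have hDint : Integrable D ν := integrable_of_eq_zero_or_one hD hD01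
  simp only [integral_cond_eq_sum_of_inter_eq_mul hU (hZz _) hZ₁ (hZU 1) hYint,
    integral_cond_eq_sum_of_inter_eq_mul hU (hZz _) hZ₀ (hZU 0) hYint,
    integral_cond_eq_sum_of_inter_eq_mul hU (hZz _) hZ₁ (hZU 1) hDint,
    integral_cond_eq_sum_of_inter_eq_mul hU (hZz _) hZ₀ (hZU 0) hDint,
    ← Finset.sum_sub_distrib, ← mul_sub, hcell, Finset.mul_sum]
  exact Finset.sum_congr rfl fun u _ => by ring

end

theorem ate_equals_average_wald_general
    {Ω : Type*} [MeasurableSpace Ω] (μ : Measure Ω) [IsProbabilityMeasure μ]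
    {𝒳 : Type*} [Fintype 𝒳] [MeasurableSpace 𝒳] [MeasurableSingletonClass 𝒳]
    {𝒰 : Type*} [Fintype 𝒰] [MeasurableSpace 𝒰] [MeasurableSingletonClass 𝒰]
    (Z D Y1 Y0 Y : Ω → ℝ) (X : Ω → 𝒳) (U : Ω → 𝒰)
    (hZmeas : Measurable Z) (hDmeas : Measurable D)
    (hXmeas : Measurable X) (hUmeas : Measurable U)
    (hD01 : ∀ ω, D ω = 0 ∨ D ω = 1)
    (hY1int : Integrable Y1 μ) (hY0int : Integrable Y0 μ)
    (hYdef : ∀ ω, Y ω = D ω * Y1 ω + (1 - D ω) * Y0 ω)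
    -- (A2) conditionally on X = x, Z is independent of U
    (hA2 : ∀ (x : 𝒳) (z : ℝ) (u : 𝒰),
      (μ[|{ω | X ω = x}]) ({ω | Z ω = z} ∩ {ω | U ω = u})
        = (μ[|{ω | X ω = x}]) {ω | Z ω = z} * (μ[|{ω | X ω = x}]) {ω | U ω = u})
    -- (A1′, A4) under μ(· | X = x, U = u), each potential outcome is independent
    -- of the pair (Z, D)
    (hA14one : ∀ (x : 𝒳) (u : 𝒰),
      IndepFun Y1 (fun ω => (Z ω, D ω)) (μ[|{ω | X ω = x} ∩ {ω | U ω = u}]))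
    (hA14zero : ∀ (x : 𝒳) (u : 𝒰),
      IndepFun Y0 (fun ω => (Z ω, D ω)) (μ[|{ω | X ω = x} ∩ {ω | U ω = u}]))
    -- positivity
    (hPos : ∀ (z : ℝ), (z = 0 ∨ z = 1) → ∀ (x : 𝒳) (u : 𝒰),
      0 < μ ({ω | Z ω = z} ∩ {ω | X ω = x} ∩ {ω | U ω = u}))
    -- δ^D(x) ≠ 0 for every x
    (hδDne : ∀ x : 𝒳,
      condMean μ D ({ω | Z ω = 1} ∩ {ω | X ω = x})
        - condMean μ D ({ω | Z ω = 0} ∩ {ω | X ω = x}) ≠ 0)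
    -- (A5.b) conditional no additive U–d interaction within each stratum x
    (hA5b : ∀ (x : 𝒳) (u : 𝒰),
      condMean μ (fun ω => Y1 ω - Y0 ω) ({ω | X ω = x} ∩ {ω | U ω = u})
        = condMean μ (fun ω => Y1 ω - Y0 ω) {ω | X ω = x}) :
    (∫ ω, (Y1 ω - Y0 ω) ∂μ)
      = ∑ x : 𝒳, (μ {ω | X ω = x}).toReal
          * ((condMean μ Y ({ω | Z ω = 1} ∩ {ω | X ω = x})
              - condMean μ Y ({ω | Z ω = 0} ∩ {ω | X ω = x}))
            / (condMean μ D ({ω | Z ω = 1} ∩ {ω | X ω = x})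
              - condMean μ D ({ω | Z ω = 0} ∩ {ω | X ω = x}))) := by
  obtain ⟨u₀⟩ : Nonempty 𝒰 := (nonempty_of_isProbabilityMeasure μ).map U
  have hXx (x : 𝒳) : MeasurableSet {ω | X ω = x} := hXmeas (measurableSet_singleton x)
  have hZz (z : ℝ) : MeasurableSet {ω | Z ω = z} := hZmeas (measurableSet_singleton z)
  rw [integral_eq_sum_measureReal_mul_integral_cond (W := fun ω => Y1 ω - Y0 ω) hXmeas
    (hY1int.sub hY0int)]
  refine Finset.sum_congr rfl fun x _ => ?_
  have hx0 : μ {ω | X ω = x} ≠ 0 := ((hPos 1 (.inr rfl) x u₀).trans_le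
    (measure_mono fun ω hω => hω.1.2)).ne'
  have := cond_isProbabilityMeasure hx0
  have hcondMean (W : Ω → ℝ) (z : ℝ) : condMean μ W ({ω | Z ω = z} ∩ {ω | X ω = x})
      = ∫ ω, W ω ∂μ[|{ω | X ω = x}][|{ω | Z ω = z}] := by
    rw [condMean_eq_integral_cond, cond_cond_eq_cond_inter (hXx x) (hZz z), Set.inter_comm]
  have hcell (u : 𝒰) : μ[|{ω | X ω = x}][|{ω | U ω = u}] = μ[|{ω | X ω = x} ∩ {ω | U ω = u}] :=
    cond_cond_eq_cond_inter (hXx x) (hUmeas (measurableSet_singleton u)) μ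
  have hZpos {z : ℝ} (hz : z = 0 ∨ z = 1) : μ[|{ω | X ω = x}] {ω | Z ω = z} ≠ 0 :=
    (cond_pos_of_inter_ne_zero (hXx x) ((hPos z hz x u₀).trans_le
      (measure_mono fun ω hω => Set.mem_inter hω.1.2 hω.1.1)).ne').ne'
  have hitt := itt_eq_mul_firstStage_of_indep hZmeas hDmeas hUmeas hD01 (hY1int.cond _)
    (hY0int.cond _) hYdef (hA2 x) (fun u => hcell u ▸ hA14one x u)
    (fun u => hcell u ▸ hA14zero x u) (hZpos (.inr rfl)) (hZpos (.inl rfl))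
    (τ := ∫ ω, Y1 ω - Y0 ω ∂μ[|{ω | X ω = x}]) fun u => by
      rw [hcell, ← condMean_eq_integral_cond, hA5b, condMean_eq_integral_cond]
  have hδ := hδDne x
  simp only [hcondMean] at hδ ⊢
  rw [measureReal_def, hitt, mul_div_cancel_right₀ _ hδ]

/-- under the conditional IV assumptions and positivity, if within
every stratum `x` we have `δ^D(x) ≠ 0` and the conditional no-interaction
assumption A5.b (`E[Y1 − Y0 | X=x, U=u] = E[Y1 − Y0 | X=x]` for every `u`), then
the marginal ATE equals the average Wald estimand:
`E[Y1 − Y0] = Σ_x μ(X=x) (E[Y|Z=1,X=x] − E[Y|Z=0,X=x]) / (E[D|Z=1,X=x] − E[D|Z=0,X=x])`. -/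
theorem ate_equals_average_wald
    {Ω : Type*} [MeasurableSpace Ω] (μ : Measure Ω) [IsProbabilityMeasure μ]
    {𝒳 : Type*} [Fintype 𝒳] [MeasurableSpace 𝒳] [MeasurableSingletonClass 𝒳]
    {𝒰 : Type*} [Fintype 𝒰] [MeasurableSpace 𝒰] [MeasurableSingletonClass 𝒰]
    (Z D Y1 Y0 Y : Ω → ℝ) (X : Ω → 𝒳) (U : Ω → 𝒰)
    (hZmeas : Measurable Z) (hDmeas : Measurable D)
    (hXmeas : Measurable X) (hUmeas : Measurable U)
    (hZ01 : ∀ ω, Z ω = 0 ∨ Z ω = 1) (hD01 : ∀ ω, D ω = 0 ∨ D ω = 1)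
    (hY1int : Integrable Y1 μ) (hY0int : Integrable Y0 μ)
    (hYdef : ∀ ω, Y ω = D ω * Y1 ω + (1 - D ω) * Y0 ω)
    -- (A2) conditionally on X = x, Z is independent of U
    (hA2 : ∀ (x : 𝒳) (z : ℝ) (u : 𝒰),
      (μ[|{ω | X ω = x}]) ({ω | Z ω = z} ∩ {ω | U ω = u})
        = (μ[|{ω | X ω = x}]) {ω | Z ω = z} * (μ[|{ω | X ω = x}]) {ω | U ω = u})
    -- (A1′, A4) under μ(· | X = x, U = u), each potential outcome is independent
    -- of the pair (Z, D)
    (hA14one : ∀ (x : 𝒳) (u : 𝒰),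
      IndepFun Y1 (fun ω => (Z ω, D ω)) (μ[|{ω | X ω = x} ∩ {ω | U ω = u}]))
    (hA14zero : ∀ (x : 𝒳) (u : 𝒰),
      IndepFun Y0 (fun ω => (Z ω, D ω)) (μ[|{ω | X ω = x} ∩ {ω | U ω = u}]))
    -- positivity
    (hPos : ∀ (z : ℝ), (z = 0 ∨ z = 1) → ∀ (x : 𝒳) (u : 𝒰),
      0 < μ ({ω | Z ω = z} ∩ {ω | X ω = x} ∩ {ω | U ω = u}))
    -- δ^D(x) ≠ 0 for every x
    (hδDne : ∀ x : 𝒳,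
      condMean μ D ({ω | Z ω = 1} ∩ {ω | X ω = x})
        - condMean μ D ({ω | Z ω = 0} ∩ {ω | X ω = x}) ≠ 0)
    -- (A5.b) conditional no additive U–d interaction within each stratum x
    (hA5b : ∀ (x : 𝒳) (u : 𝒰),
      condMean μ (fun ω => Y1 ω - Y0 ω) ({ω | X ω = x} ∩ {ω | U ω = u})
        = condMean μ (fun ω => Y1 ω - Y0 ω) {ω | X ω = x}) :
    (∫ ω, (Y1 ω - Y0 ω) ∂μ)
      = ∑ x : 𝒳, (μ {ω | X ω = x}).toReal
          * ((condMean μ Y ({ω | Z ω = 1} ∩ {ω | X ω = x})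
              - condMean μ Y ({ω | Z ω = 0} ∩ {ω | X ω = x}))
            / (condMean μ D ({ω | Z ω = 1} ∩ {ω | X ω = x})
              - condMean μ D ({ω | Z ω = 0} ∩ {ω | X ω = x}))) :=
  ate_equals_average_wald_general μ Z D Y1 Y0 Y X U hZmeas hDmeas hXmeas hUmeas hD01 hY1int hY0int
    hYdef hA2 hA14one hA14zero hPos hδDne hA5b
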